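/- arXiv:2209.00848 — 2 statements merged into one kernel-verified Lean document; each statement's English description precedes it below -/
import Mathlib

section
/- There exist a rational point 𝐧 ∈ 𝐒¹_III ∩ ℚ³ and a continuous bijection Φ : ℝ → 𝐒¹_III ∖ {𝐧} such that Φ maps ℚ onto (𝐒¹_III ∩ ℚ³) ∖ {𝐧} and, for every ξ ∈ ℝ ∖ ℚ, L_{(ℝ,ℚ)}(ξ) = √2 · L_{(𝐒¹_III, 𝐒¹_III∩ℚ³)}(Φ(ξ)). -/
open Filter
open scoped ENNReal

/-- The Lagrange number of `P` with respect to the set `Z` of "rational points" with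
height function `H`: the limsup, along the cofinite filter on `Z`, of
`1 / (H z * dist P z)`. -/
noncomputable def lagrangeNumber {X : Type*} [MetricSpace X] (Z : Set X) (H : X → ℝ)
    (P : X) : ℝ≥0∞ :=
  Filter.limsup (fun z : Z => ENNReal.ofReal (1 / (H z * dist P (z : X)))) Filter.cofinite

/-- The set `ℚ ⊆ ℝ`. -/
def ratQ : Set ℝ := {x | ∃ q : ℚ, x = (q : ℝ)}

/-- The height function on `ℚ ⊆ ℝ`: `H(p/q) = q²` for `p/q` in lowest terms, `q ≥ 1`. -/
noncomputable def heightQ (x : ℝ) : ℝ :=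
  letI := Classical.dec (∃ q : ℚ, x = (q : ℝ))
  if h : ∃ q : ℚ, x = (q : ℝ) then ((h.choose.den : ℝ)) ^ 2 else 1

/-- Points of `ℝ^l` with all coordinates rational. -/
def ratPts (l : ℕ) : Set (EuclideanSpace ℝ (Fin l)) := {v | ∀ i, ∃ q : ℚ, v i = (q : ℝ)}

/-- The height of a rational point of a sphere: writing it as `𝐩/q` with `𝐩 ∈ ℤ^l`,
`q ≥ 1`, `gcd(p₁,…,p_l,q) = 1`, the height is `q`, which equals the lcm of the
denominators of the rational coordinates. -/
noncomputable def heightVec {l : ℕ} (v : EuclideanSpace ℝ (Fin l)) : ℝ :=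
  letI := Classical.dec (∀ i, ∃ q : ℚ, v i = (q : ℝ))
  if h : ∀ i, ∃ q : ℚ, v i = (q : ℝ) then
    ((Finset.univ.lcm fun i => (h i).choose.den : ℕ) : ℝ)
  else 1

/-- The circle `𝐒¹_III = {(x₀,x₁,x₂) ∈ ℝ³ : x₀+x₁+x₂ = 1, x₀²+x₁²+x₂² = 1}`. -/
def S1III : Set (EuclideanSpace ℝ (Fin 3)) :=
  {v | v 0 + v 1 + v 2 = 1 ∧ v 0 ^ 2 + v 1 ^ 2 + v 2 ^ 2 = 1}

/-!
Projecting `𝐒¹_III` from `𝐧 = (0, 0, 1)` gives the rational parametrisation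
`Φ t = (-t, 1 + t, t² + t) / (t² + t + 1)`, a bijection `ℝ → 𝐒¹_III ∖ {𝐧}` with inverse
`v ↦ -v₀ / (v₀ + v₁)`; hence it matches `ℚ` with the rational points other than `𝐧`.
For `r = p / q` in lowest terms the coordinates of `Φ r` are integers over
`p² + pq + q² = q² (r² + r + 1)` without a common factor, so this is the height of `Φ r`.
With the chord length `|Φ s - Φ t| = √2 |s - t| / √((s² + s + 1)(t² + t + 1))` this gives
`√2 / (H(Φ r) |Φ ξ - Φ r|) = 1 / (q² |ξ - r|) · √(ξ² + ξ + 1) / √(r² + r + 1)`.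
Only rationals close to `ξ` make `q² |ξ - r|` small, and for them the last factor tends to `1`,
so the two limsups agree.
-/

open Filter Topology Set

section LimsupOfReal

variable {α : Type*} {l : Filter α} [l.NeBot]

theorem limsup_ofReal_le_of_eventually_le_mul_add {f g : α → ℝ}
    (h : ∀ ε > 0, ∀ᶠ x in l, f x ≤ (1 + ε) * g x + ε) :
    limsup (fun x => ENNReal.ofReal (f x)) l ≤ limsup (fun x => ENNReal.ofReal (g x)) l := by
  set L := limsup (fun x => ENNReal.ofReal (g x)) l
  have key : ∀ ε > 0, limsup (fun x => ENNReal.ofReal (f x)) l ≤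
      ENNReal.ofReal (1 + ε) * L + ENNReal.ofReal ε := by
    intro ε hε
    calc limsup (fun x => ENNReal.ofReal (f x)) l
        ≤ limsup (fun x => ENNReal.ofReal (1 + ε) * ENNReal.ofReal (g x) + ENNReal.ofReal ε) l := by
          refine limsup_le_limsup ((h ε hε).mono fun x hx => ?_)
          dsimp only
          rw [← ENNReal.ofReal_mul (by linarith)]
          exact (ENNReal.ofReal_le_ofReal hx).trans ENNReal.ofReal_add_le
      _ = ENNReal.ofReal (1 + ε) * L + ENNReal.ofReal ε := by
          rw [limsup_add_const _ _ _ (by isBoundedDefault) (by isBoundedDefault),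
            ENNReal.limsup_const_mul_of_ne_top ENNReal.ofReal_ne_top]
  have hlim : Tendsto (fun ε : ℝ => ENNReal.ofReal (1 + ε) * L + ENNReal.ofReal ε) (𝓝 0)
      (𝓝 (ENNReal.ofReal (1 + 0) * L + ENNReal.ofReal 0)) :=
    (ENNReal.Tendsto.mul_const ((ENNReal.continuous_ofReal.tendsto _).comp
      (tendsto_const_nhds.add tendsto_id)) (Or.inl (by simp))).add
      (ENNReal.continuous_ofReal.tendsto _)
  simp only [add_zero, ENNReal.ofReal_one, one_mul, ENNReal.ofReal_zero] at hlim
  exact ge_of_tendsto (hlim.mono_left (nhdsWithin_le_nhds (s := Ioi 0)))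
    (eventually_nhdsWithin_of_forall fun ε (hε : 0 < ε) => key ε hε)

theorem limsup_ofReal_mul_eq_of_tendsto_one {a c : α → ℝ} {M : ℝ} (ha : ∀ x, 0 ≤ a x)
    (hc0 : ∀ x, 0 ≤ c x) (hcM : ∀ x, c x ≤ M)
    (hc : ∀ η > 0, Tendsto c (l ⊓ 𝓟 {x | η < a x}) (𝓝 1)) :
    limsup (fun x => ENNReal.ofReal (a x * c x)) l = limsup (fun x => ENNReal.ofReal (a x)) l := by
  have near : ∀ η > 0, ∀ ε > 0, ∀ᶠ x in l, η < a x → 1 / (1 + ε) < c x ∧ c x < 1 + ε := by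
    intro η hη ε hε
    exact eventually_inf_principal.mp
      (hc η hη (Ioo_mem_nhds ((div_lt_one (by linarith)).mpr (by linarith)) (by linarith)))
  apply le_antisymm <;> apply limsup_ofReal_le_of_eventually_le_mul_add <;> intro ε hε
  · filter_upwards [near (ε / (|M| + 1)) (by positivity) ε hε] with x hx
    by_cases hax : ε / (|M| + 1) < a x
    · nlinarith [(hx hax).2, ha x]
    · have : a x * |M| ≤ ε := by
        rw [not_lt, le_div_iff₀ (by positivity)] at hax
        nlinarith [ha x, abs_nonneg M]
      nlinarith [ha x, hcM x, le_abs_self M]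
  · filter_upwards [near ε hε ε hε] with x hx
    by_cases hax : ε < a x
    · have : 1 ≤ (1 + ε) * c x := by
        have := (div_lt_iff₀' (by linarith : (0:ℝ) < 1 + ε)).mp (hx hax).1
        linarith
      nlinarith [ha x]
    · nlinarith [mul_nonneg (mul_nonneg (by linarith : (0:ℝ) ≤ 1 + ε) (ha x)) (hc0 x)]

end LimsupOfReal

theorem Function.Injective.map_cofinite_eq {α β : Type*} {e : α → β} (he : Function.Injective e)
    (hrange : (range e)ᶜ.Finite) : map e cofinite = cofinite := by
  refine le_antisymm he.tendsto_cofinite fun s hs => ?_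
  have hsub : sᶜ ⊆ e '' (e ⁻¹' s)ᶜ ∪ (range e)ᶜ := by
    rintro x hx
    by_cases hxe : x ∈ range e
    · obtain ⟨y, rfl⟩ := hxe
      exact Or.inl ⟨y, hx, rfl⟩
    · exact Or.inr hxe
  exact ((Filter.mem_cofinite.mp hs).image e |>.union hrange).subset hsub

theorem lagrangeNumber_eq_limsup_comp {X α : Type*} [MetricSpace X] {Z : Set X} (H : X → ℝ)
    (P : X) {e : α → X} (he : Function.Injective e) (heZ : ∀ a, e a ∈ Z)
    (hfin : (Z \ range e).Finite) :
    lagrangeNumber Z H P =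
      limsup (fun a => ENNReal.ofReal (1 / (H (e a) * dist P (e a)))) cofinite := by
  set e' : α → Z := fun a => ⟨e a, heZ a⟩
  have hrange : (range e')ᶜ.Finite := by
    refine (hfin.preimage Subtype.val_injective.injOn).subset fun z hz => ⟨z.2, ?_⟩
    rintro ⟨a, ha⟩
    exact hz ⟨a, Subtype.ext ha⟩
  rw [lagrangeNumber, ← Function.Injective.map_cofinite_eq
    (fun a b h => he (congrArg Subtype.val h) : Function.Injective e') hrange, ← limsup_comp]
  rfl

theorem Rat.finite_setOf_den_le_abs_le (K : ℕ) (R : ℝ) :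
    {r : ℚ | r.den ≤ K ∧ |(r : ℝ)| ≤ R}.Finite := by
  have hinj : Function.Injective fun r : ℚ => (r.num, r.den) :=
    fun r s h => Rat.ext (congrArg Prod.fst h) (congrArg Prod.snd h)
  refine (((finite_Icc (-⌈R * K⌉) ⌈R * K⌉).prod (finite_Iic K)).preimage hinj.injOn).subset ?_
  rintro r ⟨hK, hR⟩
  have hnum : |(r.num : ℝ)| ≤ R * K := by
    calc |(r.num : ℝ)| = |(r : ℝ)| * r.den := by
          rw [Rat.cast_def, abs_div, Nat.abs_cast, div_mul_cancel₀ _ (by positivity)]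
      _ ≤ R * K := mul_le_mul hR (by exact_mod_cast hK) (by positivity) ((abs_nonneg _).trans hR)
  have hnum_le : |r.num| ≤ ⌈R * K⌉ := by exact_mod_cast hnum.trans (Int.le_ceil _)
  exact ⟨abs_le.mp hnum_le, hK⟩

theorem tendsto_ratCast_of_den_sq_mul_abs_sub_lt (ξ C : ℝ) :
    Tendsto (fun r : ℚ => (r : ℝ)) (cofinite ⊓ 𝓟 {r | (r.den : ℝ) ^ 2 * |ξ - r| < C}) (𝓝 ξ) := by
  rw [Metric.tendsto_nhds]
  intro δ hδ
  refine eventually_inf_principal.mpr (eventually_cofinite.mpr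
    ((Rat.finite_setOf_den_le_abs_le ⌈C / δ⌉₊ (|ξ| + C)).subset ?_))
  intro r hr
  simp only [Set.mem_ofPred_eq, Classical.not_imp, not_lt, Real.dist_eq, abs_sub_comm (r : ℝ)] at hr
  obtain ⟨hgood, hfar⟩ := hr
  have hden : (1 : ℝ) ≤ r.den := by exact_mod_cast r.pos
  have hden_sq : (r.den : ℝ) ≤ r.den ^ 2 := by nlinarith
  have hden_le : (r.den : ℝ) ≤ C / δ := by
    rw [le_div_iff₀ hδ]
    nlinarith
  refine ⟨by exact_mod_cast hden_le.trans (Nat.le_ceil _), ?_⟩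
  have := abs_sub_abs_le_abs_sub (r : ℝ) ξ
  rw [abs_sub_comm] at this
  nlinarith [abs_nonneg (ξ - r)]

theorem ratQ_eq_range : ratQ = range ((↑) : ℚ → ℝ) :=
  ext fun _ => exists_congr fun _ => eq_comm

theorem heightQ_ratCast (r : ℚ) : heightQ r = (r.den : ℝ) ^ 2 := by
  have h : ∃ q : ℚ, (r : ℝ) = q := ⟨r, rfl⟩
  rw [heightQ, dif_pos h, ← Rat.cast_injective h.choose_spec]

theorem lagrangeNumber_ratQ (ξ : ℝ) :
    lagrangeNumber ratQ heightQ ξ =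
      limsup (fun r : ℚ => ENNReal.ofReal (1 / ((r.den : ℝ) ^ 2 * |ξ - r|))) cofinite := by
  rw [lagrangeNumber_eq_limsup_comp heightQ ξ (e := ((↑) : ℚ → ℝ)) Rat.cast_injective
    (fun r => (⟨r, rfl⟩ : (r : ℝ) ∈ ratQ))]
  · simp only [heightQ_ratCast, Real.dist_eq]
  · rw [ratQ_eq_range, sdiff_self]
    exact finite_empty

theorem heightVec_toLp_ratCast {l : ℕ} (x : Fin l → ℚ) :
    heightVec (WithLp.toLp 2 fun i => (x i : ℝ)) = (Finset.univ.lcm fun i => (x i).den : ℕ) := by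
  have h : ∀ i, ∃ q : ℚ, (WithLp.toLp 2 fun i => (x i : ℝ)) i = q := fun i => ⟨x i, rfl⟩
  rw [heightVec, dif_pos h]
  congr! with i
  exact (Rat.cast_injective (h i).choose_spec).symm

theorem Finset.lcm_den_div_eq {ι : Type*} [Fintype ι] (m : ι → ℤ) {N : ℤ} (hN : 0 < N)
    (hcop : ∀ d : ℤ, (∀ i, N ∣ m i * d) → N ∣ d) :
    ((univ.lcm fun i => ((m i : ℚ) / N).den : ℕ) : ℤ) = N := by
  refine Int.dvd_antisymm (by positivity) hN.le ?_ (hcop _ fun i => ?_)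
  · refine Int.natCast_dvd.mpr (Finset.lcm_dvd fun i _ => Int.natCast_dvd.mp ?_)
    simpa only [Rat.divInt_eq_div] using Rat.den_dvd (m i) N
  · obtain ⟨k, hk⟩ := Finset.dvd_lcm (s := univ) (f := fun i => ((m i : ℚ) / N).den) (mem_univ i)
    refine ⟨((m i : ℚ) / N).num * k, ?_⟩
    have : (m i : ℚ) * (((m i : ℚ) / N).den * k : ℕ) = N * (((m i : ℚ) / N).num * k) := by
      push_cast
      rw [← Rat.mul_den_eq_num]
      field_simp
    rw [hk]
    exact_mod_cast this

theorem sq_add_self_add_one_pos {K : Type*} [Field K] [LinearOrder K] [IsStrictOrderedRing K]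
    (t : K) : 0 < t ^ 2 + t + 1 := by
  nlinarith [sq_nonneg (t + 1), sq_nonneg t]

/-- `circleParam t` is the second intersection of `𝐒¹_III` with the line through
`𝐧 = (0, 0, 1)` in direction `(-t, 1 + t, -1)`. -/
def circleParam {K : Type*} [Field K] (t : K) : Fin 3 → K :=
  ![-t / (t ^ 2 + t + 1), (1 + t) / (t ^ 2 + t + 1), (t ^ 2 + t) / (t ^ 2 + t + 1)]

noncomputable def circlePoint (t : ℝ) : EuclideanSpace ℝ (Fin 3) :=
  WithLp.toLp 2 (circleParam t)

noncomputable def circleCoord (v : EuclideanSpace ℝ (Fin 3)) : ℝ :=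
  -v 0 / (v 0 + v 1)

noncomputable def northPole : EuclideanSpace ℝ (Fin 3) := !₂[0, 0, 1]

theorem northPole_mem : northPole ∈ S1III ∩ ratPts 3 := by
  refine ⟨by simp [S1III, northPole], fun i => ?_⟩
  fin_cases i
  exacts [⟨0, by simp [northPole]⟩, ⟨0, by simp [northPole]⟩, ⟨1, by simp [northPole]⟩]

theorem circlePoint_mem (t : ℝ) : circlePoint t ∈ S1III := by
  -- the form in which `field_simp` looks for `t ^ 2 + t + 1 ≠ 0`
  have : t * (t + 1) + 1 ≠ 0 := by nlinarith [sq_add_self_add_one_pos t]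
  constructor <;>
  · simp only [circlePoint, circleParam, PiLp.toLp_apply, Matrix.cons_val]
    field_simp
    ring

theorem circlePoint_ne_northPole (t : ℝ) : circlePoint t ≠ northPole := by
  intro h
  have h2 := congrArg (fun v : EuclideanSpace ℝ (Fin 3) => v 2) h
  simp only [circlePoint, circleParam, northPole, PiLp.toLp_apply, Matrix.cons_val] at h2
  rw [div_eq_one_iff_eq (sq_add_self_add_one_pos t).ne'] at h2
  linarith

theorem circleCoord_circlePoint : Function.LeftInverse circleCoord circlePoint := by
  intro t
  have : t * (t + 1) + 1 ≠ 0 := by nlinarith [sq_add_self_add_one_pos t]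
  simp only [circleCoord, circlePoint, circleParam, PiLp.toLp_apply, Matrix.cons_val]
  field_simp
  ring

theorem circlePoint_circleCoord {v : EuclideanSpace ℝ (Fin 3)} (hv : v ∈ S1III \ {northPole}) :
    circlePoint (circleCoord v) = v := by
  obtain ⟨⟨hsum, hsq⟩, hne⟩ := hv
  have hw : v 0 + v 1 ≠ 0 := by
    intro hw
    have h0 : v 0 = 0 := by nlinarith
    refine hne (PiLp.ext fun i => ?_)
    fin_cases i <;> simp [northPole] <;> linarith
  set c := circleCoord v
  have hcw : c * (v 0 + v 1) = -v 0 := div_mul_cancel₀ _ hw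
  have hDw : (c ^ 2 + c + 1) * (v 0 + v 1) = 1 := by
    refine mul_right_cancel₀ hw ?_
    linear_combination (c * (v 0 + v 1) - v 0 + (v 0 + v 1)) * hcw + hsq / 2 +
      (v 0 + v 1 - v 2 - 1) / 2 * hsum
  have hD := (sq_add_self_add_one_pos c).ne'
  refine PiLp.ext fun i => ?_
  fin_cases i <;> simp only [circlePoint, circleParam, PiLp.toLp_apply, Fin.reduceFinMk,
    Matrix.cons_val] <;> rw [div_eq_iff hD]
  · linear_combination c * hDw - (c ^ 2 + c + 1) * hcw
  · linear_combination -(1 + c) * hDw + (c ^ 2 + c + 1) * hcw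
  · linear_combination hDw - (c ^ 2 + c + 1) * hsum

theorem injective_circlePoint : Function.Injective circlePoint :=
  circleCoord_circlePoint.injective

theorem range_circlePoint : range circlePoint = S1III \ {northPole} := by
  refine subset_antisymm ?_ fun v hv => ⟨circleCoord v, circlePoint_circleCoord hv⟩
  exact range_subset_iff.mpr fun t => ⟨circlePoint_mem t, circlePoint_ne_northPole t⟩

theorem continuous_circlePoint : Continuous circlePoint := by
  refine (PiLp.continuous_toLp 2 _).comp (continuous_pi fun i => ?_)
  have := fun t : ℝ => (sq_add_self_add_one_pos t).ne'
  fin_cases i <;> simp only [circleParam] <;> fun_prop (disch := exact this _)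

theorem circlePoint_ratCast (r : ℚ) :
    circlePoint r = WithLp.toLp 2 fun i => ((circleParam r i : ℚ) : ℝ) := by
  refine PiLp.ext fun i => ?_
  fin_cases i <;> simp [circlePoint, circleParam]

theorem image_ratQ_circlePoint : circlePoint '' ratQ = (S1III ∩ ratPts 3) \ {northPole} := by
  refine subset_antisymm ?_ fun v ⟨⟨hS, hrat⟩, hne⟩ => ?_
  · rintro _ ⟨_, ⟨r, rfl⟩, rfl⟩
    refine ⟨⟨circlePoint_mem r, fun i => ⟨circleParam r i, ?_⟩⟩, circlePoint_ne_northPole r⟩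
    rw [circlePoint_ratCast]
  · obtain ⟨q₀, hq₀⟩ := hrat 0
    obtain ⟨q₁, hq₁⟩ := hrat 1
    refine ⟨circleCoord v, ⟨-q₀ / (q₀ + q₁), ?_⟩, circlePoint_circleCoord ⟨hS, hne⟩⟩
    rw [circleCoord, hq₀, hq₁]
    push_cast
    rfl

theorem dist_circlePoint (s t : ℝ) :
    dist (circlePoint s) (circlePoint t) =
      √2 * |s - t| / (√(s ^ 2 + s + 1) * √(t ^ 2 + t + 1)) := by
  have hs : s * (s + 1) + 1 ≠ 0 := by nlinarith [sq_add_self_add_one_pos s]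
  have ht : t * (t + 1) + 1 ≠ 0 := by nlinarith [sq_add_self_add_one_pos t]
  have hsq : ∑ i, dist (circlePoint s i) (circlePoint t i) ^ 2 =
      (√2 * |s - t| / (√(s ^ 2 + s + 1) * √(t ^ 2 + t + 1))) ^ 2 := by
    rw [div_pow, mul_pow, mul_pow, Real.sq_sqrt zero_le_two, sq_abs,
      Real.sq_sqrt (sq_add_self_add_one_pos s).le, Real.sq_sqrt (sq_add_self_add_one_pos t).le]
    simp only [Fin.sum_univ_three, circlePoint, circleParam, PiLp.toLp_apply, Real.dist_eq, sq_abs,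
      Matrix.cons_val]
    field_simp
    ring
  rw [EuclideanSpace.dist_eq, hsq, Real.sqrt_sq (by positivity)]

theorem heightVec_circlePoint_div {p q : ℤ} (hq : 0 < q) (hpq : IsCoprime p q) :
    heightVec (circlePoint (p / q)) = p ^ 2 + p * q + q ^ 2 := by
  set m : Fin 3 → ℤ := ![-(p * q), q * (p + q), p * (p + q)]
  have hN : 0 < p ^ 2 + p * q + q ^ 2 := by nlinarith [sq_nonneg (2 * p + q)]
  have hcop : ∀ d : ℤ, (∀ i, p ^ 2 + p * q + q ^ 2 ∣ m i * d) → p ^ 2 + p * q + q ^ 2 ∣ d := by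
    intro d hd
    obtain ⟨a, b, hab⟩ := hpq.pow (m := 2) (n := 2)
    have h1 : p ^ 2 + p * q + q ^ 2 ∣ q * (p + q) * d := hd 1
    have h2 : p ^ 2 + p * q + q ^ 2 ∣ p * (p + q) * d := hd 2
    rw [show d = (a + b) * ((p ^ 2 + p * q + q ^ 2) * d) - a * (q * (p + q) * d) -
      b * (p * (p + q) * d) by linear_combination -d * hab]
    exact dvd_sub (dvd_sub (dvd_mul_of_dvd_right (dvd_mul_right _ _) _)
      (dvd_mul_of_dvd_right h1 _)) (dvd_mul_of_dvd_right h2 _)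
  have hq' : (q : ℝ) ≠ 0 := by exact_mod_cast hq.ne'
  have hN' : (p : ℝ) * q + p ^ 2 + q ^ 2 ≠ 0 := by
    have : (0 : ℝ) < p ^ 2 + p * q + q ^ 2 := by exact_mod_cast hN
    linarith
  have hparam : circlePoint (p / q) =
      WithLp.toLp 2 fun i => (((m i : ℚ) / (p ^ 2 + p * q + q ^ 2 : ℤ) : ℚ) : ℝ) := by
    refine PiLp.ext fun i => ?_
    fin_cases i <;> simp [circlePoint, circleParam, m] <;> field_simp
    ring
  rw [hparam, heightVec_toLp_ratCast, ← Int.cast_natCast, Finset.lcm_den_div_eq m hN hcop]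
  push_cast
  ring

theorem heightVec_circlePoint_ratCast (r : ℚ) :
    heightVec (circlePoint r) = (r.den : ℝ) ^ 2 * ((r : ℝ) ^ 2 + r + 1) := by
  have h := heightVec_circlePoint_div (p := r.num) (q := r.den) (by positivity)
    (Int.isCoprime_iff_gcd_eq_one.mpr r.reduced)
  push_cast at h
  rw [Rat.cast_def, h]
  field_simp

theorem sqrt_two_mul_inv_heightVec_mul_dist_circlePoint (ξ : ℝ) (r : ℚ) :
    √2 * (1 / (heightVec (circlePoint r) * dist (circlePoint ξ) (circlePoint r))) =
      1 / ((r.den : ℝ) ^ 2 * |ξ - r|) * (√(ξ ^ 2 + ξ + 1) / √((r : ℝ) ^ 2 + r + 1)) := by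
  rcases eq_or_ne ξ r with rfl | hξr
  · simp
  have hden : (r.den : ℝ) ≠ 0 := by positivity
  have hD := Real.sq_sqrt (sq_add_self_add_one_pos (r : ℝ)).le
  have hsqrt := (Real.sqrt_pos.mpr (sq_add_self_add_one_pos (r : ℝ))).ne'
  have hsqrt' := (Real.sqrt_pos.mpr (sq_add_self_add_one_pos ξ)).ne'
  have habs : |ξ - r| ≠ 0 := abs_ne_zero.mpr (sub_ne_zero.mpr hξr)
  rw [heightVec_circlePoint_ratCast, dist_circlePoint, ← hD, Real.sqrt_sq (Real.sqrt_nonneg _)]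
  field_simp

theorem lagrangeNumber_S1III_circlePoint (ξ : ℝ) :
    lagrangeNumber (S1III ∩ ratPts 3) heightVec (circlePoint ξ) =
      limsup (fun r : ℚ => ENNReal.ofReal
        (1 / (heightVec (circlePoint r) * dist (circlePoint ξ) (circlePoint r)))) cofinite := by
  have hrange : (range fun r : ℚ => circlePoint r) = (S1III ∩ ratPts 3) \ {northPole} := by
    rw [← image_ratQ_circlePoint, ratQ_eq_range, ← range_comp]
    rfl
  refine lagrangeNumber_eq_limsup_comp heightVec (circlePoint ξ)
    (injective_circlePoint.comp Rat.cast_injective) (fun r => ?_) ?_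
  · exact (hrange.subset (mem_range_self r)).1
  · rw [hrange]
    exact (finite_singleton northPole).subset fun v ⟨hv, hv'⟩ => by_contra fun h => hv' ⟨hv, h⟩

theorem lagrangeNumber_ratQ_eq_sqrt_two_mul (ξ : ℝ) :
    lagrangeNumber ratQ heightQ ξ = ENNReal.ofReal √2 *
      lagrangeNumber (S1III ∩ ratPts 3) heightVec (circlePoint ξ) := by
  rw [lagrangeNumber_ratQ, lagrangeNumber_S1III_circlePoint,
    ← ENNReal.limsup_const_mul_of_ne_top ENNReal.ofReal_ne_top]
  simp_rw [← ENNReal.ofReal_mul (Real.sqrt_nonneg 2),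
    sqrt_two_mul_inv_heightVec_mul_dist_circlePoint]
  have hpos := sq_add_self_add_one_pos (K := ℝ)
  refine (limsup_ofReal_mul_eq_of_tendsto_one (M := 2 * √(ξ ^ 2 + ξ + 1)) (fun r => by positivity)
    (fun r => by positivity) (fun r => ?_) fun η hη => ?_).symm
  · have : 1 / 2 ≤ √((r : ℝ) ^ 2 + r + 1) :=
      Real.le_sqrt_of_sq_le (by nlinarith [sq_nonneg ((r : ℝ) + 1 / 2)])
    rw [div_le_iff₀ (Real.sqrt_pos.mpr (hpos _))]
    nlinarith [Real.sqrt_nonneg (ξ ^ 2 + ξ + 1)]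
  · have hcont : Tendsto (fun t : ℝ => √(ξ ^ 2 + ξ + 1) / √(t ^ 2 + t + 1)) (𝓝 ξ) (𝓝 1) := by
      have hc : Continuous fun t : ℝ => √(ξ ^ 2 + ξ + 1) / √(t ^ 2 + t + 1) :=
        continuous_const.div (by fun_prop) fun t => (Real.sqrt_pos.mpr (hpos t)).ne'
      convert hc.tendsto ξ
      exact (div_self (Real.sqrt_pos.mpr (hpos ξ)).ne').symm
    refine hcont.comp ((tendsto_ratCast_of_den_sq_mul_abs_sub_lt ξ (1 / η)).mono_left
      (inf_le_inf_left _ (principal_mono.mpr fun r hr => ?_)))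
    have hr : η < 1 / ((r.den : ℝ) ^ 2 * |ξ - r|) := hr
    have hX : 0 < (r.den : ℝ) ^ 2 * |ξ - r| := by
      by_contra! h
      exact (hη.trans hr).not_ge (one_div_nonpos.mpr h)
    exact (lt_one_div hη hX).mp hr

/-- Theorem 1.1(c): there exist a rational point `𝐧 ∈ 𝐒¹_III ∩ ℚ³` and a continuous
bijection `Φ : ℝ → 𝐒¹_III ∖ {𝐧}` mapping `ℚ` onto `(𝐒¹_III ∩ ℚ³) ∖ {𝐧}` such that
`L_(ℝ,ℚ)(ξ) = √2 · L_(𝐒¹_III, 𝐒¹_III∩ℚ³)(Φ ξ)` for all `ξ ∈ ℝ ∖ ℚ`. -/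
theorem lagrange_S1III :
    ∃ n ∈ S1III ∩ ratPts 3, ∃ Φ : ℝ → EuclideanSpace ℝ (Fin 3),
      Continuous Φ ∧ Function.Injective Φ ∧ Set.range Φ = S1III \ {n} ∧
      Φ '' ratQ = (S1III ∩ ratPts 3) \ {n} ∧
      ∀ ξ : ℝ, ξ ∉ ratQ →
        lagrangeNumber ratQ heightQ ξ =
          ENNReal.ofReal (Real.sqrt 2) *
            lagrangeNumber (S1III ∩ ratPts 3) heightVec (Φ ξ) :=
  ⟨northPole, northPole_mem, circlePoint, continuous_circlePoint, injective_circlePoint,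
    range_circlePoint, image_ratQ_circlePoint, fun ξ _ => lagrangeNumber_ratQ_eq_sqrt_two_mul ξ⟩
end

section
/- Let p, q be coprime integers, not both zero. Then gcd(pq, q² − pq, p² − pq) = 1, and, setting m = p² − pq + q² (so m ≥ 1), the point (pq/m, (q²−pq)/m, (p²−pq)/m) is a rational point of 𝐒¹_III = {(x₀,x₁,x₂) ∈ ℝ³ : x₀+x₁+x₂ = 1, x₀²+x₁²+x₂² = 1} of height m = p² − pq + q². -/
/-!
The point is `(a₀, a₁, a₂)/m` with `a₀ + a₁ + a₂ = m` and `a₀² + a₁² + a₂² = m²`, both polynomial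
identities in `p, q`. A common divisor of the `aᵢ` divides `p² = a₀ + a₂` and `q² = a₀ + a₁`,
hence is a unit. The height is the lcm `L` of the denominators of the `aᵢ/m`: each divides `m`,
and conversely `m ∣ aᵢ L` for every `i`, so `m` divides `gcd(aᵢ) · L = L`.
-/

lemma sq_sub_mul_add_sq_pos {R : Type*} [CommRing R] [LinearOrder R] [IsStrictOrderedRing R]
    {p q : R} (hne : ¬(p = 0 ∧ q = 0)) : 0 < p ^ 2 - p * q + q ^ 2 := by
  have hsq : 0 < p ^ 2 + q ^ 2 := by
    rcases not_and_or.mp hne with hp | hq <;> positivity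
  -- `2 (p² - pq + q²) = (p - q)² + p² + q²`
  nlinarith [sq_nonneg (p - q)]

lemma dvd_one_of_dvd_mul_of_dvd_sq_sub {p q d : ℤ} (hco : IsCoprime p q) (hpq : d ∣ p * q)
    (hq : d ∣ q ^ 2 - p * q) (hp : d ∣ p ^ 2 - p * q) : d ∣ 1 := by
  have hp2 : d ∣ p ^ 2 := by simpa using dvd_add hpq hp
  have hq2 : d ∣ q ^ 2 := by simpa using dvd_add hpq hq
  exact (hco.pow.isUnit_of_dvd' hp2 hq2).dvd

lemma Rat.den_intCast_div_dvd (a m : ℤ) : (((a : ℚ) / m).den : ℤ) ∣ m := by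
  rw [← Rat.divInt_eq_div]
  exact Rat.den_dvd a m

lemma Rat.intCast_mul_den_eq_num_mul (a m : ℤ) (hm : m ≠ 0) :
    a * ((a : ℚ) / m).den = ((a : ℚ) / m).num * m := by
  have h := Rat.mul_den_eq_num ((a : ℚ) / m)
  rw [div_mul_eq_mul_div, div_eq_iff (by exact_mod_cast hm)] at h
  exact_mod_cast h

theorem lcm_den_intCast_div_eq {ι : Type*} (s : Finset ι) (a : ι → ℤ) {m : ℤ} (hm : 0 < m)
    (hcop : IsCoprime (s.gcd a) m) :
    ((s.lcm fun i => ((a i : ℚ) / m).den : ℕ) : ℤ) = m := by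
  set L := s.lcm fun i => ((a i : ℚ) / m).den
  refine Int.dvd_antisymm (by positivity) hm.le ?_ ?_
  · exact Int.natCast_dvd.mpr
      (Finset.lcm_dvd fun i _ => Int.natCast_dvd.mp (Rat.den_intCast_div_dvd (a i) m))
  · have hdvd : m ∣ s.gcd a * L := by
      rw [← Int.normalize_coe_nat L, ← Finset.gcd_mul_right]
      refine Finset.dvd_gcd fun i hi => ?_
      calc m ∣ a i * ((a i : ℚ) / m).den :=
            ⟨_, by rw [Rat.intCast_mul_den_eq_num_mul _ _ hm.ne', mul_comm]⟩
        _ ∣ a i * L := mul_dvd_mul_left _ (Int.natCast_dvd_natCast.mpr (Finset.dvd_lcm hi))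
    exact hcop.symm.dvd_of_dvd_mul_left hdvd

lemma heightVec_eq_lcm_den {l : ℕ} {v : EuclideanSpace ℝ (Fin l)} (r : Fin l → ℚ)
    (hv : ∀ i, v i = r i) : heightVec v = ((Finset.univ.lcm fun i => (r i).den : ℕ) : ℝ) := by
  have hrat : ∀ i, ∃ t : ℚ, v i = t := fun i => ⟨r i, hv i⟩
  rw [heightVec, dif_pos hrat]
  congr
  funext i
  rw [Rat.cast_injective ((hrat i).choose_spec.symm.trans (hv i))]

theorem heightVec_eq_of_eq_intCast_div {l : ℕ} {v : EuclideanSpace ℝ (Fin l)} (a : Fin l → ℤ)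
    {m : ℤ} (hm : 0 < m) (hcop : IsCoprime (Finset.univ.gcd a) m)
    (hv : ∀ i, v i = (a i : ℝ) / m) : heightVec v = m := by
  rw [heightVec_eq_lcm_den (fun i => (a i : ℚ) / m) (fun i => by rw [hv]; push_cast; rfl)]
  exact_mod_cast lcm_den_intCast_div_eq Finset.univ a hm hcop

/-- Heights of rational points of `𝐒¹_III`.  Let `p, q` be coprime integers, not both
zero, and `m = p² − pq + q²`.  Then `gcd(pq, q²−pq, p²−pq) = 1`, `m ≥ 1`, and the
point `(pq/m, (q²−pq)/m, (p²−pq)/m)` is a rational point of `𝐒¹_III` of height `m`. -/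
theorem height_S1III_point (p q : ℤ) (hco : IsCoprime p q) (hne : ¬(p = 0 ∧ q = 0))
    (m : ℤ) (hm : m = p ^ 2 - p * q + q ^ 2) :
    Int.gcd (Int.gcd (p * q) (q ^ 2 - p * q)) (p ^ 2 - p * q) = 1 ∧
    1 ≤ m ∧
    ∀ v : EuclideanSpace ℝ (Fin 3),
      v 0 = ((p * q : ℤ) : ℝ) / (m : ℝ) →
      v 1 = ((q ^ 2 - p * q : ℤ) : ℝ) / (m : ℝ) →
      v 2 = ((p ^ 2 - p * q : ℤ) : ℝ) / (m : ℝ) →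
      v ∈ S1III ∩ ratPts 3 ∧ heightVec v = (m : ℝ) := by
  have hmpos : 0 < m := hm ▸ sq_sub_mul_add_sq_pos hne
  refine ⟨?_, hmpos, fun v hv0 hv1 hv2 => ?_⟩
  · refine Nat.dvd_one.mp <| Int.natCast_dvd_natCast.mp <|
      dvd_one_of_dvd_mul_of_dvd_sq_sub hco ?_ ?_ (Int.gcd_dvd_right _ _)
    · exact (Int.gcd_dvd_left _ _).trans (Int.gcd_dvd_left _ _)
    · exact (Int.gcd_dvd_left _ _).trans (Int.gcd_dvd_right _ _)
  set a : Fin 3 → ℤ := ![p * q, q ^ 2 - p * q, p ^ 2 - p * q]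
  have hv : ∀ i, v i = (a i : ℝ) / m := by
    intro i
    fin_cases i <;> assumption
  have hS : v ∈ S1III := by
    have hmR : (m : ℝ) ≠ 0 := by exact_mod_cast hmpos.ne'
    simp only [S1III, Set.mem_ofPred_eq, hv0, hv1, hv2]
    field_simp
    subst hm
    push_cast
    constructor <;> ring
  have hcop : IsCoprime (Finset.univ.gcd a) m := isCoprime_one_left.of_isCoprime_of_dvd_left <|
    dvd_one_of_dvd_mul_of_dvd_sq_sub hco (Finset.gcd_dvd (Finset.mem_univ 0))
      (Finset.gcd_dvd (Finset.mem_univ 1)) (Finset.gcd_dvd (Finset.mem_univ 2))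
  exact ⟨⟨hS, fun i => ⟨a i / m, by rw [hv]; push_cast; rfl⟩⟩,
    heightVec_eq_of_eq_intCast_div a hmpos hcop hv⟩
end
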